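/- arXiv:math/9807061 — 5 statements merged into one kernel-verified Lean document; each statement's English description precedes it below -/
import Mathlib

section
/- Let V be a finite-dimensional vector space with a non-degenerate alternating bilinear form, let U be a subspace with U ∩ U^⊥ = 0, and let A, A^⊥ be a pair of mutually orthogonal subspaces of V with dim(A ∩ U) = dim U − dim(A^⊥ ∩ U). Then A = (A ∩ U) ⊕ (A ∩ U^⊥). -/
open Module

theorem stmt_5 {k V : Type*} [Field k] [AddCommGroup V] [Module k V]
    [FiniteDimensional k V]
    (B : LinearMap.BilinForm k V) (halt : B.IsAlt) (hnd : B.Nondegenerate)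
    (U A : Submodule k V)
    (hU : U ⊓ B.orthogonal U = ⊥)
    (hdim : finrank k ↥(A ⊓ U) = finrank k U - finrank k ↥(B.orthogonal A ⊓ U)) :
    A = (A ⊓ U) ⊔ (A ⊓ B.orthogonal U) ∧ (A ⊓ U) ⊓ (A ⊓ B.orthogonal U) = ⊥ := by
  have hrefl : B.IsRefl := halt.isRefl
  -- restricted form on U is nondegenerate
  have hres : (B.restrict U).Nondegenerate :=
    B.nondegenerate_restrict_of_disjoint_orthogonal hrefl (disjoint_iff.mpr hU)
  have hresrefl : (B.restrict U).IsRefl := fun x y h => hrefl _ _ h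
  have hcompl : IsCompl U (B.orthogonal U) :=
    B.isCompl_orthogonal_of_restrict_nondegenerate hrefl hres
  -- the projection onto U along U^⊥
  set p : V →ₗ[k] V :=
    U.subtype ∘ₗ (Submodule.linearProjOfIsCompl U (B.orthogonal U) hcompl) with hp
  have hpU : ∀ v : V, p v ∈ U := fun v => (Submodule.linearProjOfIsCompl U _ hcompl v).2
  have hpmemU : ∀ v : V, v ∈ U → p v = v := by
    intro v hv
    exact congrArg Subtype.val (Submodule.projectionOnto_apply_left hcompl ⟨v, hv⟩)
  have hsub : ∀ v : V, v - p v ∈ B.orthogonal U := by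
    intro v
    have := Submodule.linearProjOfIsCompl_apply_left hcompl
    -- v = p v + (v - p v); show the difference is in the orthogonal
    have h1 : p (p v) = p v := hpmemU _ (hpU v)
    have : p (v - p v) = 0 := by
      rw [map_sub, h1, sub_self]
    -- membership via kernel of the projection
    have hker : ∀ w : V, p w = 0 → w ∈ B.orthogonal U := by
      intro w hw
      have := Submodule.linearProjOfIsCompl_apply_eq_zero_iff hcompl (x := w)
      simp only [hp, LinearMap.comp_apply, Submodule.subtype_apply,
        ZeroMemClass.coe_eq_zero] at hw
      exact this.mp hw
    exact hker _ this
  -- the orthogonal complement of (A^⊥ ⊓ U) inside U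
  set W : Submodule k U := (B.orthogonal A ⊓ U).comap U.subtype with hW
  have hWrank : finrank k W = finrank k ↥(B.orthogonal A ⊓ U) := by
    rw [hW]
    have : (B.orthogonal A ⊓ U).comap U.subtype ≃ₗ[k] ↥(B.orthogonal A ⊓ U) :=
      Submodule.comapSubtypeEquivOfLe inf_le_right
    exact this.finrank_eq
  set X : Submodule k U := (B.restrict U).orthogonal W with hX
  have hXrank : finrank k X = finrank k U - finrank k W :=
    LinearMap.BilinForm.finrank_orthogonal hres W
  -- image of A under the projection, as a submodule of U
  set PA : Submodule k U := (A.map p).comap U.subtype with hPA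
  have hPArank : (A.map p).comap U.subtype ≃ₗ[k] ↥(A.map p) :=
    Submodule.comapSubtypeEquivOfLe (by
      rintro x ⟨a, _, rfl⟩; exact hpU a)
  -- A ⊓ U ≤ PA
  have h1 : (A ⊓ U).comap U.subtype ≤ PA := by
    rintro ⟨x, hxU⟩ hx
    simp only [Submodule.mem_comap, Submodule.mem_inf, Submodule.subtype_apply] at hx
    exact ⟨x, hx.1, hpmemU x hx.2⟩
  -- PA ≤ X
  have h2 : PA ≤ X := by
    rintro ⟨x, hxU⟩ hx
    obtain ⟨a, haA, hax⟩ := hx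
    intro n hn
    obtain ⟨hnAo, hnU⟩ := (Submodule.mem_comap.mp hn : (n : V) ∈ B.orthogonal A ⊓ U)
    -- B n x = 0
    have hBna : B (n : V) a = 0 := hrefl _ _ (hnAo a haA)
    have hBnd : B (n : V) (a - p a) = 0 := hsub a (n : V) hnU
    have : B (n : V) (p a) = 0 := by
      have h := map_sub (B (n : V)) a (p a)
      rw [hBnd, hBna, zero_sub] at h
      exact neg_eq_zero.mp h.symm
    simpa [LinearMap.BilinForm.restrict_apply, hax] using this
  have hfr1 : finrank k ↥((A ⊓ U).comap U.subtype) = finrank k ↥(A ⊓ U) :=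
    (Submodule.comapSubtypeEquivOfLe inf_le_right).finrank_eq
  have hXA : finrank k X = finrank k ↥(A ⊓ U) := by
    rw [hXrank, hWrank, hdim]
  -- conclude A ⊓ U = PA = X (as submodules of U)
  have hPAX : (A ⊓ U).comap U.subtype = PA := by
    have hle : (A ⊓ U).comap U.subtype ≤ X := le_trans h1 h2
    have heq : (A ⊓ U).comap U.subtype = X := by
      apply Submodule.eq_of_le_of_finrank_le hle
      rw [hXA, hfr1]
    exact le_antisymm h1 (heq ▸ h2)
  -- hence for every a ∈ A, p a ∈ A
  have hkey : ∀ a ∈ A, p a ∈ A := by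
    intro a haA
    have : (⟨p a, hpU a⟩ : U) ∈ PA := ⟨a, haA, rfl⟩
    rw [← hPAX] at this
    exact this.1
  constructor
  · apply le_antisymm
    · intro a haA
      have h1 : p a ∈ A ⊓ U := ⟨hkey a haA, hpU a⟩
      have h2 : a - p a ∈ A ⊓ B.orthogonal U :=
        ⟨A.sub_mem haA (hkey a haA), hsub a⟩
      have : a = p a + (a - p a) := by abel
      rw [this]
      exact Submodule.add_mem_sup h1 h2
    · exact sup_le inf_le_left inf_le_left
  · rw [eq_bot_iff, ← hU]
    intro x hx
    exact ⟨hx.1.2, hx.2.2⟩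
end

section
/- Let V be a finite-dimensional symplectic vector space and V = U ⊕ W a direct sum of subspaces. Suppose A is a subspace with A = (A ∩ U) ⊕ (A ∩ W) and its symplectic orthogonal A^⊥ satisfies A^⊥ = (A^⊥ ∩ U) ⊕ (A^⊥ ∩ W). Then A = (A ∩ U^⊥) ⊕ (A ∩ W^⊥). -/
open Module

lemma orth_sup {k V : Type*} [Field k] [AddCommGroup V] [Module k V]
    (B : LinearMap.BilinForm k V) (X Y : Submodule k V) :
    B.orthogonal (X ⊔ Y) = B.orthogonal X ⊓ B.orthogonal Y := by
  apply le_antisymm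
  · exact le_inf (B.orthogonal_le le_sup_left) (B.orthogonal_le le_sup_right)
  · rintro m ⟨h1, h2⟩ n hn
    rcases Submodule.mem_sup.mp hn with ⟨x, hx, y, hy, rfl⟩
    have := h1 x hx
    have := h2 y hy
    simp [LinearMap.add_apply, *]

theorem stmt_6 {k V : Type*} [Field k] [AddCommGroup V] [Module k V]
    [FiniteDimensional k V]
    (B : LinearMap.BilinForm k V) (halt : B.IsAlt) (hnd : B.Nondegenerate)
    (U W A : Submodule k V) (hUW : IsCompl U W)
    (hA : A = (A ⊓ U) ⊔ (A ⊓ W))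
    (hAperp : B.orthogonal A = (B.orthogonal A ⊓ U) ⊔ (B.orthogonal A ⊓ W)) :
    A = (A ⊓ B.orthogonal U) ⊔ (A ⊓ B.orthogonal W) ∧
      (A ⊓ B.orthogonal U) ⊓ (A ⊓ B.orthogonal W) = ⊥ := by
  have hrefl : B.IsRefl := halt.isRefl
  have horthtop : B.orthogonal ⊤ = ⊥ := B.orthogonal_top_eq_bot hnd
  have hdisj : (A ⊓ B.orthogonal U) ⊓ (A ⊓ B.orthogonal W) = ⊥ := by
    rw [eq_bot_iff]
    intro x hx
    have hx' : x ∈ B.orthogonal U ⊓ B.orthogonal W := ⟨hx.1.2, hx.2.2⟩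
    rw [← orth_sup, hUW.sup_eq_top, horthtop] at hx'
    exact hx'
  refine ⟨?_, hdisj⟩
  -- dimension count
  set n := finrank k V
  have hle : (A ⊓ B.orthogonal U) ⊔ (A ⊓ B.orthogonal W) ≤ A :=
    sup_le inf_le_left inf_le_left
  refine (Submodule.eq_of_le_of_finrank_le hle ?_).symm
  have key : ∀ X : Submodule k V,
      finrank k ↥(A ⊔ B.orthogonal X) = n - finrank k ↥(B.orthogonal A ⊓ X) := by
    intro X
    have : B.orthogonal (A ⊔ B.orthogonal X) = B.orthogonal A ⊓ X := by
      rw [orth_sup, B.orthogonal_orthogonal hnd hrefl]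
    have h2 := B.finrank_orthogonal (K := k) hnd (A ⊔ B.orthogonal X)
    rw [this] at h2
    have h3 : finrank k ↥(A ⊔ B.orthogonal X) ≤ n := Submodule.finrank_le _
    have h4 : finrank k ↥(B.orthogonal A ⊓ X) ≤ n := Submodule.finrank_le _
    omega
  have hAU := Submodule.finrank_sup_add_finrank_inf_eq A (B.orthogonal U)
  have hAW := Submodule.finrank_sup_add_finrank_inf_eq A (B.orthogonal W)
  rw [key U, B.finrank_orthogonal hnd U] at hAU
  rw [key W, B.finrank_orthogonal hnd W] at hAW
  -- finrank of the perp decomposition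
  have hperp := Submodule.finrank_sup_add_finrank_inf_eq (B.orthogonal A ⊓ U)
    (B.orthogonal A ⊓ W)
  have hinfbot : (B.orthogonal A ⊓ U) ⊓ (B.orthogonal A ⊓ W) = ⊥ := by
    rw [eq_bot_iff]
    intro x hx
    exact hUW.disjoint.le_bot ⟨hx.1.2, hx.2.2⟩
  rw [← hAperp, hinfbot, finrank_bot, add_zero] at hperp
  have hAdim : finrank k ↥(B.orthogonal A) = n - finrank k ↥A :=
    B.finrank_orthogonal hnd A
  have hsum := Submodule.finrank_sup_add_finrank_inf_eq (A ⊓ B.orthogonal U)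
    (A ⊓ B.orthogonal W)
  rw [hdisj, finrank_bot, add_zero] at hsum
  have hUWdim : finrank k ↥U + finrank k ↥W = n := by
    have := Submodule.finrank_sup_add_finrank_inf_eq U W
    rw [hUW.sup_eq_top, hUW.inf_eq_bot, finrank_bot, add_zero, finrank_top] at this
    omega
  have hAn : finrank k ↥A ≤ n := Submodule.finrank_le _
  have hUn : finrank k ↥U ≤ n := Submodule.finrank_le _
  have hWn : finrank k ↥W ≤ n := Submodule.finrank_le _
  have h1 : finrank k ↥(B.orthogonal A ⊓ U) ≤ finrank k ↥U :=
    Submodule.finrank_mono inf_le_right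
  have h2 : finrank k ↥(B.orthogonal A ⊓ W) ≤ finrank k ↥W :=
    Submodule.finrank_mono inf_le_right
  omega
end

section
/- Let V be a vector space with subspaces C' ⊆ C ⊆ C'' such that dim(C''/C') = c, and let V = V₁ ⊕ ⋯ ⊕ V_{c+1} be a direct sum decomposition such that C' = ⊕ⱼ (C' ∩ Vⱼ) and C'' = ⊕ⱼ (C'' ∩ Vⱼ). Then there exists an index k such that C = (C ∩ V_k) ⊕ (C ∩ Ṽ_k), where Ṽ_k = ⊕_{j≠k} Vⱼ. -/
/-!
Both `C'` and `C''` split along the decomposition, so their dimensions are the sums of the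
dimensions of their pieces `C' ⊓ Vⱼ ≤ C'' ⊓ Vⱼ`. The total gap `c` is spread over `c + 1`
pieces, so for some `k` the pieces coincide: `C'' ⊓ V_k = C' ⊓ V_k ≤ C`. Then the modular law
splits `C` along `V_k` and the sum of the other summands.
-/

open Module

theorem inf_sup_inf_iSup_ne_eq_of_le {α ι : Type*} [CompleteLattice α] [IsModularLattice α]
    {V : ι → α} {W C : α} (k : ι) (hW : W = ⨆ j, W ⊓ V j) (hCW : C ≤ W) (hk : W ⊓ V k ≤ C) :
    (C ⊓ V k) ⊔ (C ⊓ ⨆ (j) (_ : j ≠ k), V j) = C := by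
  refine le_antisymm (sup_le inf_le_left inf_le_left) ?_
  have hW_le : W ≤ (W ⊓ V k) ⊔ ⨆ (j) (_ : j ≠ k), V j := by
    conv_lhs => rw [hW, iSup_split_single _ k]
    exact sup_le_sup_left (iSup₂_mono fun j _ => inf_le_right) _
  calc C = ((W ⊓ V k) ⊔ ⨆ (j) (_ : j ≠ k), V j) ⊓ C := (inf_eq_right.mpr (hCW.trans hW_le)).symm
    _ = (W ⊓ V k) ⊔ (⨆ (j) (_ : j ≠ k), V j) ⊓ C := sup_inf_assoc_of_le _ hk
    _ ≤ (C ⊓ V k) ⊔ (C ⊓ ⨆ (j) (_ : j ≠ k), V j) := by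
      rw [inf_comm _ C]
      exact sup_le_sup_right (le_inf hk inf_le_right) _

theorem exists_le_of_sum_lt_sum_add_card {ι : Type*} [Fintype ι] (f g : ι → ℕ)
    (h : ∑ i, g i < ∑ i, f i + Fintype.card ι) : ∃ i, g i ≤ f i := by
  have : ∑ i, g i < ∑ i, (f i + 1) := by
    simpa [Finset.sum_add_distrib] using h
  obtain ⟨i, -, hi⟩ := Finset.exists_lt_of_sum_lt this
  exact ⟨i, Nat.lt_succ_iff.mp hi⟩

section Finrank

variable {K V ι : Type*} [DivisionRing K] [AddCommGroup V] [Module K V] [FiniteDimensional K V]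

theorem Submodule.finrank_finset_sup_of_iSupIndep [DecidableEq ι] {f : ι → Submodule K V}
    (hf : iSupIndep f) (s : Finset ι) :
    finrank K ↥(s.sup f) = ∑ i ∈ s, finrank K (f i) := by
  induction s using Finset.induction_on with
  | empty => simp
  | @insert a s ha ih =>
    have hdisj : Disjoint (f a) (s.sup f) := by
      rw [Finset.sup_eq_iSup]
      exact hf.disjoint_biSup (y := ↑s) ha
    have hsup := Submodule.finrank_sup_add_finrank_inf_eq (f a) (s.sup f)
    rw [hdisj.eq_bot, finrank_bot, add_zero] at hsup
    rw [Finset.sup_insert, Finset.sum_insert ha, hsup, ih]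

theorem Submodule.finrank_iSup_of_iSupIndep [Fintype ι] {f : ι → Submodule K V}
    (hf : iSupIndep f) : finrank K ↥(⨆ i, f i) = ∑ i, finrank K (f i) := by
  classical
  rw [← Finset.sup_univ_eq_iSup, finrank_finset_sup_of_iSupIndep hf]

end Finrank

theorem stmt_9_general {K V : Type*} [Field K] [AddCommGroup V] [Module K V]
    [FiniteDimensional K V] (c : ℕ)
    (C' C C'' : Submodule K V) (h1 : C' ≤ C) (h2 : C ≤ C'')
    (hdim : finrank K C'' = finrank K C' + c)
    (Vj : Fin (c + 1) → Submodule K V)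
    (hindep : iSupIndep Vj)
    (hC' : C' = ⨆ j, C' ⊓ Vj j) (hC'' : C'' = ⨆ j, C'' ⊓ Vj j) :
    ∃ k : Fin (c + 1),
      C = (C ⊓ Vj k) ⊔ (C ⊓ ⨆ (j) (_ : j ≠ k), Vj j) := by
  have finrank_eq_sum {W : Submodule K V} (hW : W = ⨆ j, W ⊓ Vj j) :
      finrank K W = ∑ j, finrank K ↥(W ⊓ Vj j) := by
    conv_lhs => rw [hW]
    exact Submodule.finrank_iSup_of_iSupIndep (hindep.mono fun j => inf_le_right)
  obtain ⟨k, hk⟩ := exists_le_of_sum_lt_sum_add_card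
    (fun j => finrank K ↥(C' ⊓ Vj j)) (fun j => finrank K ↥(C'' ⊓ Vj j)) (by
      rw [← finrank_eq_sum hC', ← finrank_eq_sum hC'', Fintype.card_fin]
      omega)
  have hpiece : C' ⊓ Vj k = C'' ⊓ Vj k :=
    Submodule.eq_of_le_of_finrank_le (inf_le_inf_right _ (h1.trans h2)) hk
  exact ⟨k, (inf_sup_inf_iSup_ne_eq_of_le k hC'' h2 (hpiece ▸ inf_le_left.trans h1)).symm⟩

theorem stmt_9 {K V : Type*} [Field K] [AddCommGroup V] [Module K V]
    [FiniteDimensional K V] (c : ℕ)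
    (C' C C'' : Submodule K V) (h1 : C' ≤ C) (h2 : C ≤ C'')
    (hdim : finrank K C'' = finrank K C' + c)
    (Vj : Fin (c + 1) → Submodule K V)
    (hindep : iSupIndep Vj) (hsup : ⨆ j, Vj j = ⊤)
    (hC' : C' = ⨆ j, C' ⊓ Vj j) (hC'' : C'' = ⨆ j, C'' ⊓ Vj j) :
    ∃ k : Fin (c + 1),
      C = (C ⊓ Vj k) ⊔ (C ⊓ ⨆ (j) (_ : j ≠ k), Vj j) :=
  stmt_9_general c C' C C'' h1 h2 hdim Vj hindep hC' hC''
end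

section
/- Let V = V₁ ⊕ V₂ and let C', C, C'' be subspaces with C' ⊆ C ⊆ C'', C' = (C'∩V₁)⊕(C'∩V₂), C'' = (C''∩V₁)⊕(C''∩V₂), and C''∩V₁ = C'∩V₁. Then C = (C∩V₁) ⊕ (C∩V₂). -/
/-! Only the modular law is needed: since `C'' ⊓ V₁ ≤ C ≤ C''`, intersecting
`C'' = (C'' ⊓ V₁) ⊔ (C'' ⊓ V₂)` with `C` gives `C = (C'' ⊓ V₁) ⊔ (C ⊓ C'' ⊓ V₂)`. -/

theorem IsModularLattice.eq_inf_sup_inf_of_le {α : Type*} [Lattice α] [IsModularLattice α]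
    {a b x y : α} (hab : a ≤ b) (hb : b = b ⊓ x ⊔ b ⊓ y) (hx : b ⊓ x ≤ a) :
    a = a ⊓ x ⊔ a ⊓ y := by
  refine le_antisymm ?_ (sup_le inf_le_left inf_le_left)
  calc a = (b ⊓ x ⊔ b ⊓ y) ⊓ a := by rw [← hb, inf_eq_right.mpr hab]
    _ = b ⊓ x ⊔ b ⊓ y ⊓ a := sup_inf_assoc_of_le _ hx
    _ ≤ a ⊓ x ⊔ a ⊓ y :=
      sup_le_sup (le_inf hx inf_le_right) (le_inf inf_le_right (inf_le_left.trans inf_le_right))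

theorem stmt_11_general {K V : Type*} [Field K] [AddCommGroup V] [Module K V]
    (V₁ V₂ : Submodule K V)
    (C' C C'' : Submodule K V) (h1 : C' ≤ C) (h2 : C ≤ C'')
    (hC'' : C'' = (C'' ⊓ V₁) ⊔ (C'' ⊓ V₂))
    (heq : C'' ⊓ V₁ = C' ⊓ V₁) :
    C = (C ⊓ V₁) ⊔ (C ⊓ V₂) :=
  IsModularLattice.eq_inf_sup_inf_of_le h2 hC'' (heq ▸ inf_le_left.trans h1)

theorem stmt_11 {K V : Type*} [Field K] [AddCommGroup V] [Module K V]
    (V₁ V₂ : Submodule K V) (hV : IsCompl V₁ V₂)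
    (C' C C'' : Submodule K V) (h1 : C' ≤ C) (h2 : C ≤ C'')
    (hC' : C' = (C' ⊓ V₁) ⊔ (C' ⊓ V₂))
    (hC'' : C'' = (C'' ⊓ V₁) ⊔ (C'' ⊓ V₂))
    (heq : C'' ⊓ V₁ = C' ⊓ V₁) :
    C = (C ⊓ V₁) ⊔ (C ⊓ V₂) :=
  stmt_11_general V₁ V₂ C' C C'' h1 h2 hC'' heq
end

section
/- Define the Tits form of a triple of compositions (a, b, c) of 2n by Q(a,b,c) = (‖a‖² + ‖b‖² + ‖c‖² − (2n)²)/2 where ‖a‖² is the sum of squares of the parts. If a = (1, 2n−2, 1), b = (b₁,b₂,b₃) is a symmetric composition of 2n with all parts positive, c is a symmetric composition of 2n with all parts positive, and Q(a,b,c) ≤ 0, then either (a,b,c) = ((1,2,1),(1,2,1),(1,1,1,1)) or (a,b,c) = ((1,4,1),(2,2,2),(1,1,1,1,1,1)); in both cases Q = 0. -/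
/-!
Write `b = (b₁, b₂, b₁)`. Since `x ≤ x²` on `ℕ`, `‖c‖² ≥ 2n`, with equality only for
`c = (1, …, 1)`. With `‖a‖² = 2 + (2n - 2)²`, the condition `Q ≤ 0` becomes
`2b₁² + b₂² + ‖c‖² ≤ 8n - 6`. Under `2b₁ + b₂ = 2n` the left side is at least
`4n²/3 + 2n`, which forces `n ≤ 3`, and the finitely many remaining cases are checked directly.
-/

/-- `‖a‖²`, the sum of squares of the parts of a composition. -/
def sumSq (l : List ℕ) : ℕ := (l.map fun x => x ^ 2).sum

/-- The Tits quadratic form of a triple of compositions of `2n`. -/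
def titsQ (n : ℕ) (a b c : List ℕ) : ℤ :=
  ((sumSq a : ℤ) + sumSq b + sumSq c - (2 * n) ^ 2) / 2

@[simp]
lemma sumSq_nil : sumSq [] = 0 := rfl

@[simp]
lemma sumSq_cons (x : ℕ) (l : List ℕ) : sumSq (x :: l) = x ^ 2 + sumSq l := by
  simp [sumSq]

lemma sum_le_sumSq (l : List ℕ) : l.sum ≤ sumSq l := by
  induction l with
  | nil => rfl
  | cons x l ih =>
    simp only [List.sum_cons, sumSq_cons]
    exact Nat.add_le_add (Nat.le_self_pow two_ne_zero x) ih

lemma eq_replicate_of_sumSq_le_sum {l : List ℕ} (hpos : ∀ x ∈ l, 0 < x)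
    (h : sumSq l ≤ l.sum) : l = List.replicate l.sum 1 := by
  suffices hone : ∀ x ∈ l, x = 1 by
    rw [List.eq_replicate_iff.2 ⟨rfl, hone⟩]
    simp
  induction l with
  | nil => simp
  | cons x l ih =>
    simp only [List.sum_cons, sumSq_cons] at h
    have hx := Nat.le_self_pow two_ne_zero x
    have hl := sum_le_sumSq l
    have hx1 : x = 1 := by nlinarith [hpos x List.mem_cons_self]
    refine List.forall_mem_cons.2 ⟨hx1, ih (fun y hy => hpos y (List.mem_cons_of_mem x hy)) ?_⟩
    omega

lemma sumSq_mod_two (l : List ℕ) : sumSq l % 2 = l.sum % 2 := by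
  induction l with
  | nil => rfl
  | cons x l ih =>
    have hx : x ^ 2 % 2 = x % 2 := by
      rcases Nat.even_or_odd' x with ⟨k, rfl | rfl⟩ <;> ring_nf <;> omega
    simp only [List.sum_cons, sumSq_cons]
    omega

lemma two_mul_titsQ {n : ℕ} {a b c : List ℕ} (ha : a.sum = 2 * n) (hb : b.sum = 2 * n)
    (hc : c.sum = 2 * n) :
    2 * titsQ n a b c = (sumSq a : ℤ) + sumSq b + sumSq c - (2 * n) ^ 2 := by
  have hpa := sumSq_mod_two a
  have hpb := sumSq_mod_two b
  have hpc := sumSq_mod_two c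
  -- `‖x‖² ≡ Σ x (mod 2)` makes the numerator even, so the integer division in `titsQ` is exact.
  rw [titsQ, Int.mul_ediv_cancel']
  rw [Int.dvd_iff_emod_eq_zero]
  have : ((2 * n : ℤ)) ^ 2 = 2 * (2 * n ^ 2) := by ring
  omega

lemma List.eq_palindrome_of_length_eq_three {α : Type*} {l : List α} (hlen : l.length = 3)
    (hsym : l.reverse = l) : ∃ x y, l = [x, y, x] := by
  obtain ⟨x, y, z, rfl⟩ := List.length_eq_three.1 hlen
  obtain rfl : z = x := by simpa using congrArg List.head? hsym
  exact ⟨_, _, rfl⟩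

lemma tits_inequality_solutions {n b₁ b₂ s : ℕ} (hn : 2 ≤ n) (hb : 2 * b₁ + b₂ = 2 * n)
    (hs : 2 * n ≤ s) (hQ : 2 + (2 * n - 2) ^ 2 + 2 * b₁ ^ 2 + b₂ ^ 2 + s ≤ (2 * n) ^ 2) :
    (n = 2 ∧ b₁ = 1 ∧ b₂ = 2 ∧ s = 4) ∨ (n = 3 ∧ b₁ = 2 ∧ b₂ = 2 ∧ s = 6) := by
  zify [show 2 ≤ 2 * n by omega] at hb hs hQ
  have hn3 : n ≤ 3 := by
    -- `2b₁² + b₂² - 4n²/3 = (2/3)(3b₁ - 2n)²` when `b₂ = 2n - 2b₁`.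
    by_contra! h
    have h4 : (4 : ℤ) ≤ n := by exact_mod_cast h
    nlinarith [sq_nonneg (3 * (b₁ : ℤ) - 2 * n)]
  have hb₁ : b₁ ≤ n := by omega
  obtain rfl : b₂ = 2 * n - 2 * b₁ := by omega
  interval_cases n <;> interval_cases b₁ <;> norm_num at hQ ⊢ <;> omega

lemma titsQ_nonpos_iff {n : ℕ} {a b c : List ℕ} (ha : a.sum = 2 * n) (hb : b.sum = 2 * n)
    (hc : c.sum = 2 * n) : titsQ n a b c ≤ 0 ↔ sumSq a + sumSq b + sumSq c ≤ (2 * n) ^ 2 := by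
  have := two_mul_titsQ ha hb hc
  zify
  constructor <;> intro h <;> linarith

theorem stmt_13_general (n : ℕ) (hn : 2 ≤ n) (a b c : List ℕ)
    (ha : a = [1, 2 * n - 2, 1])
    (hbsum : b.sum = 2 * n) (hblen : b.length = 3)
    (hbsym : b.reverse = b)
    (hcsum : c.sum = 2 * n) (hcpos : ∀ x ∈ c, 0 < x)
    (hQ : titsQ n a b c ≤ 0) :
    ((a = [1, 2, 1] ∧ b = [1, 2, 1] ∧ c = [1, 1, 1, 1]) ∨
      (a = [1, 4, 1] ∧ b = [2, 2, 2] ∧ c = [1, 1, 1, 1, 1, 1])) ∧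
      titsQ n a b c = 0 := by
  obtain ⟨b₁, b₂, rfl⟩ := List.eq_palindrome_of_length_eq_three hblen hbsym
  subst ha
  have hnum := (titsQ_nonpos_iff (by simp; omega) hbsum hcsum).1 hQ
  simp only [sumSq_cons, sumSq_nil, List.sum_cons, List.sum_nil, add_zero, one_pow] at hnum hbsum
  obtain ⟨rfl, rfl, rfl, hs⟩ | ⟨rfl, rfl, rfl, hs⟩ :=
    tits_inequality_solutions (b₁ := b₁) (b₂ := b₂) (s := sumSq c) hn (by omega)
      (hcsum ▸ sum_le_sumSq c) (by omega)
  all_goals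
    rw [eq_replicate_of_sumSq_le_sum hcpos (by omega), hcsum]
    decide

theorem stmt_13 (n : ℕ) (hn : 2 ≤ n) (a b c : List ℕ)
    (ha : a = [1, 2 * n - 2, 1])
    (hbsum : b.sum = 2 * n) (hblen : b.length = 3)
    (hbpos : ∀ x ∈ b, 0 < x) (hbsym : b.reverse = b)
    (hcsum : c.sum = 2 * n) (hcpos : ∀ x ∈ c, 0 < x) (hcsym : c.reverse = c)
    (hQ : titsQ n a b c ≤ 0) :
    ((a = [1, 2, 1] ∧ b = [1, 2, 1] ∧ c = [1, 1, 1, 1]) ∨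
      (a = [1, 4, 1] ∧ b = [2, 2, 2] ∧ c = [1, 1, 1, 1, 1, 1])) ∧
      titsQ n a b c = 0 :=
  stmt_13_general n hn a b c ha hbsum hblen hbsym hcsum hcpos hQ
end
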